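/- arXiv:1510.02637 — 2 statements merged into one kernel-verified Lean document; each statement's English description precedes it below -/
import Mathlib

section
/- For every word w of length n ≥ 1 over Σ, n · Lynd(w) equals the number of words x of length n over Σ such that x is primitive and minrot(x) ≤ w. -/
/-!
A primitive word is fixed by no nontrivial rotation: if `l.rotate d = l` with `0 < d < |l|`,
then `l` has the periods `d` and `|l| - d`, hence by the Fine–Wilf periodicity lemma the period
`gcd d |l|`, which makes `l` a proper power. So the rotations `l.rotate c`, `c < n`, of a Lyndon
word `l` of length `n` are `n` distinct primitive words, all with minimal rotation `l`; conversely
every primitive `x` of length `n` is a rotation of the Lyndon word `minrot x`. Hence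
`(c, l) ↦ l.rotate c` is a bijection from `[0, n) × {Lyndon l ≤ w}` onto the right-hand side.
-/

namespace Lyndon

variable {α : Type*}

/-- `rot w c` is the cyclic rotation of `w` obtained by moving its first `c mod |w|`
letters to the end. -/
def rot (w : List α) (c : ℕ) : List α :=
  w.drop (c % w.length) ++ w.take (c % w.length)

/-- `power w k` is the concatenation of `k` copies of `w`. -/
def power (w : List α) (k : ℕ) : List α := (List.replicate k w).flatten

/-- `minrot w` is the lexicographically minimal cyclic rotation of `w`. -/
def minrot [LinearOrder α] (w : List α) : List α :=
  ((List.range w.length).map (rot w)).foldr min w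

/-- A word is self-minimal if it equals its minimal cyclic rotation. -/
def SelfMinimal [LinearOrder α] (w : List α) : Prop := minrot w = w

/-- A word is primitive if it is a `k`-th power (for a positive integer `k`)
only of itself. -/
def Primitive (w : List α) : Prop :=
  ∀ (u : List α) (k : ℕ), 0 < k → w = power u k → u = w

/-- A Lyndon word is a nonempty word that is primitive and self-minimal. -/
def IsLyndon [LinearOrder α] (w : List α) : Prop :=
  w ≠ [] ∧ Primitive w ∧ SelfMinimal w

/-- `Pref₋(w)`: the words `w_(i)·s` for `0 ≤ i ≤ n-1` and a letter `s < w[i+1]`,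
together with `w` itself. -/
def PrefMinus [LinearOrder α] (w : List α) : Set (List α) :=
  {y | (∃ i : Fin w.length, ∃ s : α, s < w.get i ∧ y = w.take i ++ [s]) ∨ y = w}

/-- `L(w)`: the words containing a factor (contiguous subword) from `Pref₋(w)`. -/
def InL [LinearOrder α] (w x : List α) : Prop :=
  ∃ y ∈ PrefMinus w, y <:+: x

lemma rot_eq_rotate (w : List α) (c : ℕ) : rot w c = w.rotate c := by
  rw [rot, ← List.rotate_eq_drop_append_take_mod]

@[simp] lemma power_zero (u : List α) : power u 0 = [] := rfl

lemma power_succ (u : List α) (k : ℕ) : power u (k + 1) = u ++ power u k := by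
  simp [power, List.replicate_succ]

lemma power_succ' (u : List α) (k : ℕ) : power u (k + 1) = power u k ++ u := by
  simp [power, List.replicate_succ']

@[simp] lemma power_one (u : List α) : power u 1 = u := by simp [power_succ]

@[simp] lemma length_power (u : List α) (k : ℕ) : (power u k).length = k * u.length := by
  simp [power, List.sum_replicate]

lemma rotate_length_power (u : List α) (k : ℕ) : (power u k).rotate u.length = power u k := by
  cases k with
  | zero => simp
  | succ k => rw [power_succ, List.rotate_append_length_eq, ← power_succ', power_succ]

lemma hasPeriod_of_rotate_eq_self {l : List α} {d : ℕ} (h : l.rotate d = l) : l.HasPeriod d := by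
  rw [List.hasPeriod_iff_getElem?]
  intro i hi
  have := List.getElem?_rotate (l := l) (n := d) (m := i) (by omega)
  rwa [h, Nat.mod_eq_of_lt (by omega)] at this

lemma rotate_sub_eq_self {l : List α} {d : ℕ} (hd : d ≤ l.length) (h : l.rotate d = l) :
    l.rotate (l.length - d) = l := by
  calc l.rotate (l.length - d) = (l.rotate d).rotate (l.length - d) := by rw [h]
    _ = l := by rw [List.rotate_rotate, Nat.add_sub_cancel' hd, List.rotate_length]

lemma eq_power_take_of_hasPeriod {p : ℕ} :
    ∀ (k : ℕ) {l : List α}, l.HasPeriod p → l.length = k * p → l = power (l.take p) k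
  | 0, l, _, hl => by simpa using hl
  | k + 1, l, hp, hl => by
    have hlen : (l.drop p).length = k * p := by simp [hl, Nat.succ_mul]
    have hdrop : (l.drop p).HasPeriod p :=
      List.HasPeriod.factor (u := l.take p) (w := []) (by simpa using hp)
    have htake : power ((l.drop p).take p) k = power (l.take p) k := by
      rcases k with _ | k
      · rfl
      obtain ⟨z, hz⟩ := hp.drop_prefix
      calc power ((l.drop p).take p) (k + 1) = power ((l.drop p ++ z).take p) (k + 1) := by
            rw [List.take_append_of_le_length (by rw [hlen]; nlinarith)]
        _ = power (l.take p) (k + 1) := by rw [hz]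
    conv_lhs => rw [← List.take_append_drop p l, eq_power_take_of_hasPeriod k hdrop hlen]
    rw [htake, power_succ]

lemma primitive_iff_forall_rotate_ne {l : List α} :
    Primitive l ↔ ∀ d, 0 < d → d < l.length → l.rotate d ≠ l := by
  constructor
  · intro hp d hd hdl h
    set g := d.gcd (l.length - d)
    have hper : l.HasPeriod g :=
      (hasPeriod_of_rotate_eq_self h).gcd
        (hasPeriod_of_rotate_eq_self (rotate_sub_eq_self hdl.le h)) (by omega)
    have hgd : g ∣ l.length := by
      have := Nat.dvd_add (Nat.gcd_dvd_left d (l.length - d)) (Nat.gcd_dvd_right d (l.length - d))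
      rwa [Nat.add_sub_cancel' hdl.le] at this
    have hglt : g < l.length := (Nat.gcd_le_left _ hd).trans_lt hdl
    have hk : 0 < l.length / g :=
      Nat.div_pos (Nat.le_of_dvd (by omega) hgd) (Nat.gcd_pos_of_pos_left _ hd)
    have htake := hp _ _ hk (eq_power_take_of_hasPeriod _ hper (Nat.div_mul_cancel hgd).symm)
    have := congrArg List.length htake
    simp only [List.length_take] at this
    omega
  · rintro h u k hk rfl
    rcases Nat.lt_or_ge 1 k with hk1 | hk1
    · rcases eq_or_ne u [] with rfl | hu
      · simp [power, List.flatten_replicate_nil]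
      · have hu₀ := List.length_pos_iff.mpr hu
        exact absurd (rotate_length_power u k) (h _ hu₀ (by rw [length_power]; nlinarith))
    · obtain rfl : k = 1 := by omega
      exact (power_one u).symm

lemma Primitive.rotate {l : List α} (hp : Primitive l) (c : ℕ) : Primitive (l.rotate c) := by
  rw [primitive_iff_forall_rotate_ne] at hp ⊢
  intro d hd hdl h
  rw [List.rotate_rotate, add_comm, ← List.rotate_rotate, List.rotate_eq_rotate] at h
  exact hp d hd (by simpa using hdl) h

lemma Primitive.of_isRotated {v w : List α} (hw : Primitive w) (h : w ~r v) : Primitive v := by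
  obtain ⟨c, rfl⟩ := h
  exact hw.rotate c

lemma Primitive.injOn_rotate {l : List α} (hp : Primitive l) :
    Set.InjOn l.rotate (Set.Iio l.length) := by
  suffices ∀ a b, a < b → b < l.length → l.rotate a ≠ l.rotate b by
    intro a ha b hb h
    by_contra hab
    rcases Nat.lt_or_gt_of_ne hab with hab | hab
    · exact this a b hab hb h
    · exact this b a hab ha h.symm
  intro a b hab hb h
  refine primitive_iff_forall_rotate_ne.mp (hp.rotate a) (b - a) (by omega)
    (by rw [List.length_rotate]; omega) ?_
  rw [List.rotate_rotate, Nat.add_sub_cancel' hab.le, h]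

lemma foldr_min_le_of_mem {β : Type*} [LinearOrder β] (b : β) {L : List β} {a : β}
    (ha : a ∈ L) : L.foldr min b ≤ a := by
  induction L with
  | nil => simp at ha
  | cons x L ih =>
    rcases List.mem_cons.mp ha with rfl | ha
    · exact min_le_left _ _
    · exact (min_le_right _ _).trans (ih ha)

lemma foldr_min_mem {β : Type*} [LinearOrder β] (b : β) (L : List β) :
    L.foldr min b ∈ b :: L := by
  induction L with
  | nil => simp
  | cons x L ih =>
    rw [List.foldr_cons]
    rcases min_choice x (L.foldr min b) with h | h <;> rw [h]
    · simp
    · rcases List.mem_cons.mp ih with h' | h' <;> simp [h']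

section Minrot

variable [LinearOrder α]

lemma minrot_isRotated (w : List α) : minrot w ~r w := by
  rcases List.mem_cons.mp (foldr_min_mem w ((List.range w.length).map (rot w))) with h | h
  · rw [minrot, h]
  · obtain ⟨i, -, hi⟩ := List.mem_map.mp h
    rw [minrot, ← hi, rot_eq_rotate]
    exact List.IsRotated.forall w i

lemma minrot_le_of_isRotated {v w : List α} (h : w ~r v) : minrot w ≤ v := by
  obtain ⟨c, rfl⟩ := h
  rcases eq_or_ne w [] with rfl | hw
  · simp [minrot]
  rw [← List.rotate_mod, ← rot_eq_rotate]
  exact foldr_min_le_of_mem w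
    (List.mem_map_of_mem (List.mem_range.mpr (Nat.mod_lt _ (List.length_pos_iff.mpr hw))))

lemma minrot_congr {v w : List α} (h : v ~r w) : minrot v = minrot w :=
  le_antisymm (minrot_le_of_isRotated (h.trans (minrot_isRotated w).symm))
    (minrot_le_of_isRotated (h.symm.trans (minrot_isRotated v).symm))

lemma selfMinimal_minrot (w : List α) : SelfMinimal (minrot w) :=
  minrot_congr (minrot_isRotated w)

lemma length_minrot (w : List α) : (minrot w).length = w.length :=
  (minrot_isRotated w).perm.length_eq

lemma isLyndon_minrot {x : List α} (hx : Primitive x) (hne : x ≠ []) : IsLyndon (minrot x) :=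
  ⟨fun h => hne (List.isRotated_nil_iff.mp (h ▸ (minrot_isRotated x).symm)),
    hx.of_isRotated (minrot_isRotated x).symm, selfMinimal_minrot x⟩

lemma injOn_rotate_lyndon (n : ℕ) (W : Set (List α)) :
    Set.InjOn (fun p : ℕ × List α => p.2.rotate p.1)
      (Set.Iio n ×ˢ {l | IsLyndon l ∧ l.length = n ∧ l ∈ W}) := by
  rintro ⟨c, l⟩ ⟨hc, hl, hln, -⟩ ⟨c', l'⟩ ⟨hc', hl', hl'n, -⟩ h
  dsimp only at hc hl hln hc' hl' hl'n h
  obtain rfl : l = l' := by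
    rw [← hl.2.2, ← hl'.2.2, ← minrot_congr (List.IsRotated.forall l c), h,
      minrot_congr (List.IsRotated.forall l' c')]
  obtain rfl : c = c' := hl.2.1.injOn_rotate (hln ▸ hc) (hln ▸ hc') h
  rfl

lemma image_rotate_lyndon {n : ℕ} (hn : 1 ≤ n) (W : Set (List α)) :
    (fun p : ℕ × List α => p.2.rotate p.1) ''
        (Set.Iio n ×ˢ {l | IsLyndon l ∧ l.length = n ∧ l ∈ W}) =
      {x | x.length = n ∧ Primitive x ∧ minrot x ∈ W} := by
  ext x
  constructor
  · rintro ⟨⟨c, l⟩, ⟨-, hl, hln, hlW⟩, rfl⟩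
    refine ⟨by simpa using hln, hl.2.1.rotate c, ?_⟩
    rwa [minrot_congr (List.IsRotated.forall l c), hl.2.2]
  · rintro ⟨hxn, hx, hxW⟩
    have hne : x ≠ [] := by rintro rfl; simp only [List.length_nil] at hxn; omega
    obtain ⟨c, hc⟩ := minrot_isRotated x
    have hlen : (minrot x).length = n := by rw [length_minrot, hxn]
    refine ⟨⟨c % n, minrot x⟩,
      ⟨Nat.mod_lt _ (by omega), isLyndon_minrot hx hne, hlen, hxW⟩, ?_⟩
    dsimp only
    rw [← hlen, List.rotate_mod, hc]

end Minrot

theorem stmt_7_general [LinearOrder α]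
    (w : List α) (n : ℕ) (hn : 1 ≤ n) :
    n * {l : List α | IsLyndon l ∧ l.length = n ∧ l ≤ w}.ncard =
      {x : List α | x.length = n ∧ Primitive x ∧ minrot x ≤ w}.ncard := by
  have h := (injOn_rotate_lyndon n (Set.Iic w)).ncard_image
  rw [image_rotate_lyndon hn, Set.ncard_prod, Set.ncard_Iio_nat] at h
  exact h.symm

/-- For every word `w` of length `n ≥ 1`, `n · Lynd(w)` equals the number of primitive
words `x` of length `n` with `minrot(x) ≤ w`. -/
theorem stmt_7 [LinearOrder α] [Fintype α] [Nonempty α]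
    (w : List α) (n : ℕ) (hn : 1 ≤ n) (hw : w.length = n) :
    n * {l : List α | IsLyndon l ∧ l.length = n ∧ l ≤ w}.ncard =
      {x : List α | x.length = n ∧ Primitive x ∧ minrot x ≤ w}.ncard :=
  stmt_7_general w n hn

end Lyndon
end

section
/- Let w be a self-minimal word of length n ≥ 1 over Σ. For k ≥ 0 let T_k be the number of words u of length k over Σ such that u ∉ L(w) and no nonempty suffix of u is a prefix of w, and for 1 ≤ i ≤ n let a_i = |{c ∈ Σ : c > w[i]}|. Then T_0 = 1, and for every k ≥ 1, T_k = Σ_{i=1}^{min(k, n)} a_i · T_{k-i}. -/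
/-!
A word `u` counted by `T k` with `k ≥ 1` can neither be a prefix of `w` nor contain `w`, so it
leaves `w` at some position `j < min k n`, and with a letter `c > w[j]`: otherwise `w_(j)·c` is a
factor of `u` lying in `Pref₋(w)`. What follows `c` is again counted, by `T (k - j - 1)`.
Conversely, self-minimality (where a prefix of `w` reoccurs inside `w`, the next letter is at least
the one following that prefix at the start of `w`) makes every suffix of `w_(j)·c` leave `w`
upwards, so `w_(j)·c·v` is counted whenever `v` is. Hence `u ↦ (j, c, v)` is a bijection.
-/

namespace Lyndon

variable {α : Type*}

theorem foldr_min_le_of_mem_s15 [LinearOrder α] {l : List α} {x : α} (b : α) (hx : x ∈ l) :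
    l.foldr min b ≤ x := by
  induction l with
  | nil => simp at hx
  | cons a l ih =>
    rcases List.mem_cons.1 hx with rfl | hx
    · exact min_le_left _ _
    · exact (min_le_right _ _).trans (ih hx)

theorem prefix_eq_of_length_eq {p q l : List α} (hp : p <+: l) (hq : q <+: l)
    (h : p.length = q.length) : p = q :=
  (List.prefix_of_prefix_length_le hp hq h.le).eq_of_length h

theorem concat_prefix_unique {t l : List α} {a b : α} (ha : t ++ [a] <+: l)
    (hb : t ++ [b] <+: l) : a = b := by
  simpa using prefix_eq_of_length_eq ha hb (by simp)

theorem concat_prefix_iff {t w : List α} {b : α} :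
    t ++ [b] <+: w ↔ ∃ h : t.length < w.length, w.take t.length = t ∧ w[t.length] = b := by
  constructor
  · intro hb
    have hlt : t.length < w.length := by simpa using hb.length_le
    have htake := List.prefix_iff_eq_take.1 hb
    rw [List.length_append, List.length_singleton, ← List.take_append_getElem hlt] at htake
    obtain ⟨ht, hb'⟩ := List.append_inj' htake rfl
    exact ⟨hlt, ht.symm, by simpa using hb'.symm⟩
  · rintro ⟨hlt, ht, rfl⟩
    have h := List.take_append_getElem hlt
    rw [ht] at h
    rw [h]
    exact List.take_prefix _ _

theorem prefix_or_prefix_or_exists_branch (z w : List α) :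
    z <+: w ∨ w <+: z ∨ ∃ t d e, d ≠ e ∧ t ++ [d] <+: z ∧ t ++ [e] <+: w := by
  induction z generalizing w with
  | nil => exact Or.inl List.nil_prefix
  | cons d z ih =>
    cases w with
    | nil => exact Or.inr (Or.inl List.nil_prefix)
    | cons e w =>
      by_cases hde : d = e
      · subst hde
        rcases ih w with h | h | ⟨t, d', e', hne, hz, hw⟩
        · exact Or.inl (by simpa using h)
        · exact Or.inr (Or.inl (by simpa using h))
        · exact Or.inr (Or.inr ⟨d :: t, d', e', hne, by simpa using hz, by simpa using hw⟩)
      · exact Or.inr (Or.inr ⟨[], d, e, hde, by simp, by simp⟩)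

theorem length_le_of_branch {w z t t' : List α} {b c : α} (hw : t ++ [b] <+: w)
    (hz : t ++ [c] <+: z) (hbc : b ≠ c) (hw' : t' <+: w) (hz' : t' <+: z) :
    t'.length ≤ t.length := by
  by_contra! hlt
  have hlen : (t ++ [b]).length ≤ t'.length := by simpa using hlt
  exact hbc (concat_prefix_unique (List.prefix_of_prefix_length_le hw hw' hlen)
    (List.prefix_of_prefix_length_le hz hz' (by simpa using hlt)))

theorem eq_of_branch {w z t t' : List α} {b c b' c' : α}
    (hw : t ++ [b] <+: w) (hz : t ++ [c] <+: z) (hbc : b ≠ c)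
    (hw' : t' ++ [b'] <+: w) (hz' : t' ++ [c'] <+: z) (hbc' : b' ≠ c') : t = t' :=
  prefix_eq_of_length_eq ((List.prefix_append _ _).trans hw) ((List.prefix_append _ _).trans hw')
    (le_antisymm
      (length_le_of_branch hw' hz' hbc' ((List.prefix_append _ _).trans hw)
        ((List.prefix_append _ _).trans hz))
      (length_le_of_branch hw hz hbc ((List.prefix_append _ _).trans hw')
        ((List.prefix_append _ _).trans hz')))

section Order

variable [LinearOrder α] {w t x y z u v : List α} {b c d : α}

theorem mem_prefMinus_iff :
    y ∈ PrefMinus w ↔ y = w ∨ ∃ t b s, t ++ [b] <+: w ∧ s < b ∧ y = t ++ [s] := by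
  constructor
  · rintro (⟨⟨i, hi⟩, s, hs, rfl⟩ | rfl)
    · exact Or.inr ⟨w.take i, w[i], s, by simpa using List.take_prefix (i + 1) w, hs, rfl⟩
    · exact Or.inl rfl
  · rintro (rfl | ⟨t, b, s, hb, hs, rfl⟩)
    · exact Or.inr rfl
    · obtain ⟨hlt, ht, rfl⟩ := concat_prefix_iff.1 hb
      exact Or.inl ⟨⟨t.length, hlt⟩, s, hs, by rw [ht]⟩

theorem SelfMinimal.le_rot (hsm : SelfMinimal w) {q : ℕ} (hq : q < w.length) : w ≤ rot w q :=
  hsm.symm.trans_le (foldr_min_le_of_mem_s15 w (List.mem_map_of_mem (List.mem_range.2 hq)))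

theorem SelfMinimal.le_of_prefix (hsm : SelfMinimal w) (hb : t ++ [b] <+: w)
    (hd : x ++ t ++ [d] <+: w) : b ≤ d := by
  obtain ⟨r, rfl⟩ := hd
  have hq : x.length < (x ++ t ++ [d] ++ r).length := by simp
  have hrot : rot (x ++ t ++ [d] ++ r) x.length = t ++ d :: (r ++ x) := by
    rw [rot, Nat.mod_eq_of_lt hq]
    simp
  obtain ⟨r', hr'⟩ := hb
  by_contra! hdb
  have hlt : rot (x ++ t ++ [d] ++ r) x.length < x ++ t ++ [d] ++ r := by
    rw [hrot, ← hr', List.append_assoc, List.singleton_append]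
    exact List.append_left_lt (List.cons_lt_cons_iff.2 (Or.inl hdb))
  exact (hsm.le_rot hq).not_gt hlt

def BranchesAbove (w z : List α) : Prop :=
  ∃ t b c, t ++ [b] <+: w ∧ t ++ [c] <+: z ∧ b < c

theorem BranchesAbove.mono {z' : List α} (h : BranchesAbove w z) (hz : z <+: z') :
    BranchesAbove w z' :=
  let ⟨t, b, c, hb, hc, hbc⟩ := h
  ⟨t, b, c, hb, hc.trans hz, hbc⟩

theorem BranchesAbove.not_prefix (h : BranchesAbove w z) : ¬ z <+: w := fun hzw =>
  let ⟨_, _, _, hb, hc, hbc⟩ := h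
  hbc.ne (concat_prefix_unique hb (hc.trans hzw))

theorem BranchesAbove.not_prefix_of_mem_prefMinus (h : BranchesAbove w z)
    (hy : y ∈ PrefMinus w) : ¬ y <+: z := by
  obtain ⟨t, b, c, hb, hc, hbc⟩ := h
  intro hyz
  rcases mem_prefMinus_iff.1 hy with rfl | ⟨t', b', s, hb', hs, rfl⟩
  · exact hbc.ne (concat_prefix_unique (hb.trans hyz) hc)
  · obtain rfl := eq_of_branch hb hc hbc.ne hb' hyz hs.ne'
    rw [concat_prefix_unique hb' hb, concat_prefix_unique hyz hc] at hs
    exact hbc.not_gt hs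

theorem SelfMinimal.branchesAbove_concat (hsm : SelfMinimal w) (hb : t ++ [b] <+: w)
    (hbc : b < c) (hz : z <:+ t) : BranchesAbove w (z ++ [c]) := by
  obtain ⟨x, rfl⟩ := hz
  have hzw : z.length < w.length := by
    have := hb.length_le
    simp only [List.length_append, List.length_singleton] at this
    omega
  rcases prefix_or_prefix_or_exists_branch z w with hzw' | hwz | ⟨t', d, e, hde, hd, he⟩
  · have hzb : z ++ [w[z.length]] <+: w :=
      concat_prefix_iff.2 ⟨hzw, (List.prefix_iff_eq_take.1 hzw').symm, rfl⟩
    exact ⟨z, _, c, hzb, List.prefix_rfl, (hsm.le_of_prefix hzb hb).trans_lt hbc⟩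
  · exact absurd hwz.length_le hzw.not_ge
  · have hd' : x ++ t' ++ [d] <+: w := by
      rw [List.append_assoc]
      exact ((List.prefix_append_right_inj x).2 hd).trans ((List.prefix_append _ _).trans hb)
    exact ⟨t', e, d, he, hd.trans (List.prefix_append _ _),
      (hsm.le_of_prefix he hd').lt_of_ne hde.symm⟩

def Admissible (w u : List α) : Prop :=
  ¬ InL w u ∧ ∀ s : List α, s ≠ [] → s <:+ u → ¬ s <+: w

theorem Admissible.of_suffix (hu : Admissible w u) (hv : v <:+ u) : Admissible w v :=
  ⟨fun ⟨y, hy, hyv⟩ => hu.1 ⟨y, hy, hyv.trans hv.isInfix⟩,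
    fun s hs hsv => hu.2 s hs (hsv.trans hv)⟩

theorem admissible_nil (hw : w ≠ []) : Admissible w [] := by
  refine ⟨fun ⟨y, hy, hyn⟩ => ?_, fun s hs hsn => absurd (List.suffix_nil.1 hsn) hs⟩
  rw [List.infix_nil.1 hyn, mem_prefMinus_iff] at hy
  rcases hy with h | ⟨_, _, _, -, -, h⟩
  · exact hw h.symm
  · simp at h

theorem Admissible.exists_branch (hu : Admissible w u) (hne : u ≠ []) :
    ∃ t b c v, t ++ [b] <+: w ∧ b < c ∧ Admissible w v ∧ u = t ++ c :: v := by
  rcases prefix_or_prefix_or_exists_branch u w with huw | hwu | ⟨t, d, e, hde, ⟨v, rfl⟩, he⟩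
  · exact absurd huw (hu.2 u hne List.suffix_rfl)
  · exact absurd ⟨w, Or.inr rfl, hwu.isInfix⟩ hu.1
  · rcases hde.lt_or_gt with hlt | hgt
    · exact absurd ⟨t ++ [d], mem_prefMinus_iff.2 (Or.inr ⟨t, e, d, he, hlt, rfl⟩),
        (List.prefix_append _ _).isInfix⟩ hu.1
    · exact ⟨t, e, d, v, he, hgt, hu.of_suffix (List.suffix_append _ _), by simp⟩

theorem SelfMinimal.suffix_or_branchesAbove {s : List α} (hsm : SelfMinimal w)
    (hb : t ++ [b] <+: w) (hbc : b < c) (hs : s <:+ t ++ c :: v) :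
    s <:+ v ∨ BranchesAbove w s := by
  have hv : v <:+ t ++ c :: v := ⟨t ++ [c], by simp⟩
  rcases List.suffix_or_suffix_of_suffix hs hv with hsv | ⟨s', rfl⟩
  · exact Or.inl hsv
  · have hs' : s' <:+ t ++ [c] := by
      rw [← List.suffix_append_self_iff (l₃ := v)]
      simpa using hs
    rcases List.suffix_concat_iff.1 hs' with rfl | ⟨z, rfl, hz⟩
    · exact Or.inl List.suffix_rfl
    · exact Or.inr ((hsm.branchesAbove_concat hb hbc hz).mono (List.prefix_append _ _))

theorem SelfMinimal.admissible_append (hsm : SelfMinimal w) (hb : t ++ [b] <+: w)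
    (hbc : b < c) (hv : Admissible w v) : Admissible w (t ++ c :: v) := by
  refine ⟨fun ⟨y, hy, hyu⟩ => ?_, fun s hs hsu hsw => ?_⟩
  · obtain ⟨s, hys, hsu⟩ := List.infix_iff_prefix_suffix.1 hyu
    rcases hsm.suffix_or_branchesAbove hb hbc hsu with hsv | hs
    · exact hv.1 ⟨y, hy, hys.isInfix.trans hsv.isInfix⟩
    · exact hs.not_prefix_of_mem_prefMinus hy hys
  · rcases hsm.suffix_or_branchesAbove hb hbc hsu with hsv | hs'
    · exact hv.2 s hs hsv hsw
    · exact hs'.not_prefix hsw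

def admissibleWords (w : List α) (k : ℕ) : Set (List α) :=
  {u | u.length = k ∧ Admissible w u}

theorem admissibleWords_zero (hw : w ≠ []) : admissibleWords w 0 = {[]} := by
  ext u
  simp only [admissibleWords, Set.mem_ofPred_eq, Set.mem_singleton_iff, List.length_eq_zero_iff,
    and_iff_left_iff_imp]
  rintro rfl
  exact admissible_nil hw

theorem finite_admissibleWords [Finite α] (k : ℕ) : (admissibleWords w k).Finite :=
  (List.finite_length_eq α k).subset fun _ hu => hu.1

theorem SelfMinimal.admissibleWords_eq_biUnion (hsm : SelfMinimal w) {k : ℕ} (hk : 1 ≤ k) :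
    admissibleWords w k = ⋃ j ∈ (Finset.range (min k w.length) : Set ℕ),
      (fun p : α × List α => w.take j ++ p.1 :: p.2) ''
        ({c | ∃ h : j < w.length, w[j] < c} ×ˢ admissibleWords w (k - (j + 1))) := by
  ext u
  simp only [admissibleWords, Set.mem_iUnion, Set.mem_image, Set.mem_prod, Set.mem_ofPred_eq,
    Finset.coe_range, Set.mem_Iio, Prod.exists, lt_min_iff]
  constructor
  · rintro ⟨rfl, hu⟩
    obtain ⟨t, b, c, v, hb, hbc, hv, rfl⟩ := hu.exists_branch (List.ne_nil_of_length_pos hk)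
    obtain ⟨htw, ht, rfl⟩ := concat_prefix_iff.1 hb
    refine ⟨t.length, ⟨?_, htw⟩, c, v, ⟨⟨htw, hbc⟩, ?_, hv⟩, by rw [ht]⟩
    · simp
    · simp only [List.length_append, List.length_cons]
      omega
  · rintro ⟨j, ⟨hjk, -⟩, c, v, ⟨⟨hjw, hc⟩, hvk, hv⟩, rfl⟩
    refine ⟨?_, hsm.admissible_append ?_ hc hv⟩
    · simp only [List.length_append, List.length_take, List.length_cons, hvk]
      omega
    · rw [List.take_append_getElem hjw]
      exact List.take_prefix _ _

theorem SelfMinimal.ncard_admissibleWords [Finite α] (hsm : SelfMinimal w) {k : ℕ} (hk : 1 ≤ k) :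
    (admissibleWords w k).ncard = ∑ j ∈ Finset.range (min k w.length),
      {c | ∃ h : j < w.length, w[j] < c}.ncard * (admissibleWords w (k - (j + 1))).ncard := by
  have hinj (t : List α) : Function.Injective fun p : α × List α => t ++ p.1 :: p.2 :=
    fun p q h => by simpa [Prod.ext_iff] using h
  rw [hsm.admissibleWords_eq_biUnion hk, Set.Finite.ncard_biUnion (Finset.finite_toSet _),
    finsum_mem_coe_finset]
  · refine Finset.sum_congr rfl fun j _ => ?_
    rw [Set.ncard_image_of_injective _ (hinj _), Set.ncard_prod]
  · exact fun j _ => ((Set.toFinite _).prod (finite_admissibleWords _)).image _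
  · refine fun j _ j' _ hjj' => Set.disjoint_left.2 ?_
    rintro - ⟨⟨c, v⟩, ⟨⟨hjw, hc⟩, -⟩, rfl⟩ ⟨⟨c', v'⟩, ⟨⟨hjw', hc'⟩, -⟩, hu⟩
    dsimp only at hu hc hc'
    have hw (i : ℕ) (hi : i < w.length) : w.take i ++ [w[i]] <+: w := by
      rw [List.take_append_getElem hi]
      exact List.take_prefix _ _
    have hu' (i : ℕ) (c : α) (v : List α) : w.take i ++ [c] <+: w.take i ++ c :: v :=
      ⟨v, by simp⟩
    have := eq_of_branch (hw j hjw) (hu' j c v) hc.ne (hw j' hjw') (hu ▸ hu' j' c' v') hc'.ne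
    exact hjj' (by simpa [hjw.le, hjw'.le] using congrArg List.length this)

end Order

/-- For self-minimal `w` of length `n ≥ 1`, let `T k` be the number of words `u` of
length `k` with `u ∉ L(w)` such that no nonempty suffix of `u` is a prefix of `w`,
and let `a i = |{c : c > w[i]}|` for `1 ≤ i ≤ n`. Then `T 0 = 1` and for `k ≥ 1`,
`T k = Σ_{i=1}^{min(k,n)} a i · T (k - i)`. -/
theorem stmt_15 [LinearOrder α] [Fintype α]
    (w : List α) (n : ℕ) (hn : 1 ≤ n) (hw : w.length = n) (hsm : SelfMinimal w)
    (T : ℕ → ℕ)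
    (hT : ∀ k : ℕ, T k = {u : List α | u.length = k ∧ ¬ InL w u ∧
      ∀ s : List α, s ≠ [] → s <:+ u → ¬ s <+: w}.ncard)
    (a : ℕ → ℕ)
    (ha : ∀ i : ℕ, ∀ h1 : 1 ≤ i, ∀ h2 : i ≤ n,
      a i = {c : α | w.get ⟨i - 1, by omega⟩ < c}.ncard) :
    T 0 = 1 ∧ ∀ k : ℕ, 1 ≤ k →
      T k = ∑ i ∈ Finset.Icc 1 (min k n), a i * T (k - i) := by
  subst hw
  have hT' (k : ℕ) : T k = (admissibleWords w k).ncard := hT k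
  refine ⟨?_, fun k hk => ?_⟩
  · rw [hT', admissibleWords_zero (List.ne_nil_of_length_pos (by omega)), Set.ncard_singleton]
  · rw [hT', hsm.ncard_admissibleWords hk, ← Finset.Ico_add_one_right_eq_Icc,
      Finset.sum_Ico_eq_sum_range, Nat.add_sub_cancel]
    refine Finset.sum_congr rfl fun j hj => ?_
    rw [Finset.mem_range, lt_min_iff] at hj
    rw [add_comm 1 j, ha (j + 1) (by omega) (by omega), hT']
    congr 2
    ext c
    simp [hj.2]

end Lyndon
end
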